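/- arXiv:1911.13201 — 2 statements merged into one kernel-verified Lean document; each statement's English description precedes it below -/
import Mathlib

section
/- Let X be a T0 space and A ⊆ X. Then A is irreducible in X if and only if ξ_X(A) = {↑x : x ∈ A} is irreducible in the Smyth power space P_S(X). -/
/-- The specialization order: `x ≤ y` iff `x ∈ cl {y}`. -/
def specLE {X : Type*} [TopologicalSpace X] (x y : X) : Prop := x ∈ closure ({y} : Set X)

/-- `↑x` in the specialization order. -/
def upClo {X : Type*} [TopologicalSpace X] (x : X) : Set X := {y | specLE x y}

/-- A set is saturated iff it is an upper set in the specialization order. -/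
def IsSaturatedSet {X : Type*} [TopologicalSpace X] (K : Set X) : Prop :=
  ∀ x y, x ∈ K → specLE x y → y ∈ K

/-- The underlying set of the Smyth power space: nonempty compact saturated subsets. -/
def KSet (X : Type*) [TopologicalSpace X] : Type _ :=
  {K : Set X // K.Nonempty ∧ IsCompact K ∧ IsSaturatedSet K}

/-- The upper Vietoris topology, generated by the sets `□U = {K : K ⊆ U}` for `U` open. -/
instance (X : Type*) [TopologicalSpace X] : TopologicalSpace (KSet X) :=
  TopologicalSpace.generateFrom
    {S : Set (KSet X) | ∃ U : Set X, IsOpen U ∧ S = {K : KSet X | K.1 ⊆ U}}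

lemma self_mem_upClo {X : Type*} [TopologicalSpace X] (x : X) : x ∈ upClo x :=
  subset_closure rfl

lemma upClo_subset_iff {X : Type*} [TopologicalSpace X] {x : X} {U : Set X}
    (hU : IsOpen U) : upClo x ⊆ U ↔ x ∈ U := by
  constructor
  · exact fun h => h (self_mem_upClo x)
  · intro hx y hy
    rcases (mem_closure_iff.mp hy) U hU hx with ⟨z, hzU, hz⟩
    rwa [Set.mem_singleton_iff.mp hz] at hzU

lemma isCompact_upClo {X : Type*} [TopologicalSpace X] (x : X) : IsCompact (upClo x) := by
  rw [isCompact_iff_finite_subcover]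
  intro ι U hU hcov
  rcases Set.mem_iUnion.mp (hcov (self_mem_upClo x)) with ⟨i, hi⟩
  exact ⟨{i}, by
    intro y hy
    exact Set.mem_iUnion₂.mpr ⟨i, Finset.mem_singleton_self i,
      (upClo_subset_iff (hU i)).mpr hi hy⟩⟩

lemma isSaturated_upClo {X : Type*} [TopologicalSpace X] (x : X) :
    IsSaturatedSet (upClo x) := by
  intro a b ha hab
  -- ha : x ∈ closure {a}, hab : a ∈ closure {b}; need x ∈ closure {b}
  have : closure ({a} : Set X) ⊆ closure ({b} : Set X) := by
    rw [← closure_closure (s := ({b} : Set X))]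
    exact closure_mono (Set.singleton_subset_iff.mpr hab)
  exact this ha

/-- The map `ξ : X → P_S(X)`. -/
def xi {X : Type*} [TopologicalSpace X] (x : X) : KSet X :=
  ⟨upClo x, ⟨x, self_mem_upClo x⟩, isCompact_upClo x, isSaturated_upClo x⟩

lemma continuous_xi {X : Type*} [TopologicalSpace X] : Continuous (xi (X := X)) := by
  apply continuous_generateFrom_iff.mpr
  rintro S ⟨U, hU, rfl⟩
  have : xi (X := X) ⁻¹' {K : KSet X | K.1 ⊆ U} = U := by
    ext x
    exact upClo_subset_iff hU
  rw [this]
  exact hU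

lemma box_isOpen {X : Type*} [TopologicalSpace X] {U : Set X} (hU : IsOpen U) :
    IsOpen {K : KSet X | K.1 ⊆ U} :=
  TopologicalSpace.isOpen_generateFrom_of_mem ⟨U, hU, rfl⟩

/-- `A ⊆ X` is irreducible iff `ξ_X(A) = {↑x : x ∈ A}` is irreducible in the Smyth power
space `P_S(X)`. -/
theorem irreducible_iff_xi_irreducible {X : Type*} [TopologicalSpace X] [T0Space X]
    (A : Set X) :
    IsIrreducible A ↔ IsIrreducible {K : KSet X | ∃ x ∈ A, K.1 = upClo x} := by
  have himg : {K : KSet X | ∃ x ∈ A, K.1 = upClo x} = xi '' A := by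
    ext K
    constructor
    · rintro ⟨x, hx, hK⟩
      exact ⟨x, hx, Subtype.ext hK.symm⟩
    · rintro ⟨x, hx, rfl⟩
      exact ⟨x, hx, rfl⟩
  rw [himg]
  constructor
  · intro h
    exact h.image xi continuous_xi.continuousOn
  · rintro ⟨⟨K, x, hx, rfl⟩, hpre⟩
    refine ⟨⟨x, hx⟩, ?_⟩
    intro U V hU hV ⟨a, haA, haU⟩ ⟨b, hbA, hbV⟩
    have h1 : (xi '' A ∩ {K : KSet X | K.1 ⊆ U}).Nonempty :=
      ⟨xi a, ⟨a, haA, rfl⟩, (upClo_subset_iff hU).mpr haU⟩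
    have h2 : (xi '' A ∩ {K : KSet X | K.1 ⊆ V}).Nonempty :=
      ⟨xi b, ⟨b, hbA, rfl⟩, (upClo_subset_iff hV).mpr hbV⟩
    rcases hpre _ _ (box_isOpen hU) (box_isOpen hV) h1 h2 with
      ⟨K, ⟨c, hcA, rfl⟩, hcU, hcV⟩
    exact ⟨c, hcA, (upClo_subset_iff hU).mp hcU, (upClo_subset_iff hV).mp hcV⟩
end

section
/- A first countable T0 space X is sober if and only if it is well-filtered, if and only if it is an ω-well-filtered d-space. -/
/-- `X` is well-filtered: for every filtered family `𝒦` of nonempty compact saturated sets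
and every open `U`, `⋂𝒦 ⊆ U` implies `K ⊆ U` for some `K ∈ 𝒦`. -/
def WellFiltered (X : Type*) [TopologicalSpace X] : Prop :=
  ∀ 𝒦 : Set (Set X), 𝒦.Nonempty →
    (∀ K ∈ 𝒦, K.Nonempty ∧ IsCompact K ∧ IsSaturatedSet K) →
    (∀ K₁ ∈ 𝒦, ∀ K₂ ∈ 𝒦, ∃ K₃ ∈ 𝒦, K₃ ⊆ K₁ ∩ K₂) →
    ∀ U : Set X, IsOpen U → ⋂₀ 𝒦 ⊆ U → ∃ K ∈ 𝒦, K ⊆ U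

/-- `X` is ω-well-filtered: the countable case of well-filteredness. -/
def OmegaWellFiltered (X : Type*) [TopologicalSpace X] : Prop :=
  ∀ K : ℕ → Set X, (∀ n, (K n).Nonempty ∧ IsCompact (K n) ∧ IsSaturatedSet (K n)) →
    (∀ m n, ∃ k, K k ⊆ K m ∩ K n) →
    ∀ U : Set X, IsOpen U → (⋂ n, K n) ⊆ U → ∃ n, K n ⊆ U

/-- `X` is a d-space: the closure of every directed subset (in the specialization order)
has a generic point. -/
def DSpace (X : Type*) [TopologicalSpace X] : Prop :=
  ∀ D : Set X, D.Nonempty → DirectedOn specLE D → ∃ x, closure D = closure ({x} : Set X)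

open Set Filter Topology

section Saturation

variable {X : Type*} [TopologicalSpace X]

lemma specLE_iff_specializes {x y : X} : specLE x y ↔ y ⤳ x :=
  specializes_iff_mem_closure.symm

lemma specLE_refl (x : X) : specLE x x :=
  subset_closure rfl

lemma specLE_trans {x y z : X} (hxy : specLE x y) (hyz : specLE y z) : specLE x z :=
  specLE_iff_specializes.2 <| (specLE_iff_specializes.1 hyz).trans (specLE_iff_specializes.1 hxy)

lemma IsOpen.mem_of_specLE {U : Set X} (hU : IsOpen U) {x y : X} (hx : x ∈ U)
    (hxy : specLE x y) : y ∈ U :=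
  (specLE_iff_specializes.1 hxy).mem_open hU hx

def saturation (K : Set X) : Set X := {y | ∃ x ∈ K, specLE x y}

lemma subset_saturation (K : Set X) : K ⊆ saturation K :=
  fun x hx => ⟨x, hx, specLE_refl x⟩

lemma saturation_mono {K L : Set X} (h : K ⊆ L) : saturation K ⊆ saturation L :=
  fun _ ⟨x, hx, hxy⟩ => ⟨x, h hx, hxy⟩

lemma isSaturatedSet_saturation (K : Set X) : IsSaturatedSet (saturation K) :=
  fun _ _ ⟨x, hx, hxy⟩ hyz => ⟨x, hx, specLE_trans hxy hyz⟩

lemma saturation_subset_of_isOpen {K U : Set X} (hU : IsOpen U) (hKU : K ⊆ U) :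
    saturation K ⊆ U :=
  fun _ ⟨_, hx, hxy⟩ => hU.mem_of_specLE (hKU hx) hxy

lemma IsCompact.saturation {K : Set X} (hK : IsCompact K) : IsCompact (saturation K) := by
  refine isCompact_of_finite_subcover fun U hU hcover => ?_
  obtain ⟨t, ht⟩ := hK.elim_finite_subcover U hU ((subset_saturation K).trans hcover)
  exact ⟨t, saturation_subset_of_isOpen (isOpen_biUnion fun i _ => hU i) ht⟩

lemma saturation_singleton_subset {x y : X} (hxy : specLE x y) :
    saturation {y} ⊆ saturation {x} := by
  rintro z ⟨_, rfl, hyz⟩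
  exact ⟨x, rfl, specLE_trans hxy hyz⟩

end Saturation

section Sober

variable {X : Type*} [TopologicalSpace X]

lemma exists_minimal_isClosed_meets {𝒦 : Set (Set X)} (h𝒦 : ∀ K ∈ 𝒦, IsCompact K)
    {C₀ : Set X} (hC₀ : IsClosed C₀) (hmeets : ∀ K ∈ 𝒦, (C₀ ∩ K).Nonempty) :
    ∃ C ⊆ C₀, Minimal (fun C => IsClosed C ∧ ∀ K ∈ 𝒦, (C ∩ K).Nonempty) C := by
  refine zorn_superset_nonempty _ (fun c hc hchain hcne => ?_) C₀ ⟨hC₀, hmeets⟩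
  have : Nonempty c := hcne.to_subtype
  refine ⟨⋂₀ c, ⟨isClosed_sInter fun C hC => (hc hC).1, fun K hK => ?_⟩,
    fun C hC => sInter_subset_of_mem hC⟩
  by_contra hempty
  rw [not_nonempty_iff_eq_empty, inter_comm, sInter_eq_iInter] at hempty
  obtain ⟨C, hC⟩ := (h𝒦 K hK).elim_directed_family_closed (fun C : c => (C : Set X))
    (fun C => (hc C.2).1) hempty fun C D =>
      (hchain.total C.2 D.2).elim (fun h => ⟨C, subset_rfl, h⟩) fun h => ⟨D, h, subset_rfl⟩
  exact ((hc C.2).2 K hK).ne_empty (by rw [inter_comm, hC])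

lemma isIrreducible_of_minimal_isClosed_meets {𝒦 : Set (Set X)} (hne : 𝒦.Nonempty)
    (hfil : ∀ K₁ ∈ 𝒦, ∀ K₂ ∈ 𝒦, ∃ K₃ ∈ 𝒦, K₃ ⊆ K₁ ∩ K₂) {C : Set X}
    (hC : Minimal (fun C => IsClosed C ∧ ∀ K ∈ 𝒦, (C ∩ K).Nonempty) C) : IsIrreducible C := by
  obtain ⟨K₀, hK₀⟩ := hne
  refine ⟨(hC.1.2 K₀ hK₀).left, ?_⟩
  rw [isPreirreducible_iff_isClosed_union_isClosed]
  intro F₁ F₂ hF₁ hF₂ hcover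
  have avoid : ∀ F, IsClosed F → ¬C ⊆ F → ∃ K ∈ 𝒦, ∀ x ∈ C ∩ K, x ∉ F := by
    intro F hF hCF
    by_contra! hmeets
    refine hCF ((hC.le_of_le ⟨hC.1.1.inter hF, fun K hK => ?_⟩ inter_subset_left).trans
      inter_subset_right)
    obtain ⟨x, ⟨hxC, hxK⟩, hxF⟩ := hmeets K hK
    exact ⟨x, ⟨hxC, hxF⟩, hxK⟩
  by_contra! hnot
  obtain ⟨K₁, hK₁, h₁⟩ := avoid F₁ hF₁ hnot.1
  obtain ⟨K₂, hK₂, h₂⟩ := avoid F₂ hF₂ hnot.2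
  obtain ⟨K₃, hK₃, hK₃₁₂⟩ := hfil K₁ hK₁ K₂ hK₂
  obtain ⟨x, hxC, hxK₃⟩ := hC.1.2 K₃ hK₃
  rcases hcover hxC with hxF₁ | hxF₂
  · exact h₁ x ⟨hxC, (hK₃₁₂ hxK₃).1⟩ hxF₁
  · exact h₂ x ⟨hxC, (hK₃₁₂ hxK₃).2⟩ hxF₂

lemma QuasiSober.wellFiltered [QuasiSober X] : WellFiltered X := by
  intro 𝒦 hne h𝒦 hfil U hU hsub
  by_contra! hout
  obtain ⟨C, hCU, hC⟩ := exists_minimal_isClosed_meets (fun K hK => (h𝒦 K hK).2.1)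
    hU.isClosed_compl fun K hK => (not_subset.1 (hout K hK)).imp fun _ ⟨hxK, hxU⟩ => ⟨hxU, hxK⟩
  obtain ⟨x, hx⟩ := QuasiSober.sober (isIrreducible_of_minimal_isClosed_meets hne hfil hC) hC.1.1
  have hx𝒦 : x ∈ ⋂₀ 𝒦 := fun K hK => by
    obtain ⟨y, hyC, hyK⟩ := hC.1.2 K hK
    exact (h𝒦 K hK).2.2 y x hyK (specLE_iff_specializes.2 (hx.specializes hyC))
  exact hCU hx.mem (hsub hx𝒦)

lemma WellFiltered.omegaWellFiltered (h : WellFiltered X) : OmegaWellFiltered X := by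
  intro K hK hdir U hU hsub
  obtain ⟨_, ⟨n, rfl⟩, hn⟩ := h (range K) (range_nonempty K) (forall_mem_range.2 hK)
    (forall_mem_range.2 fun m => forall_mem_range.2 fun n =>
      (hdir m n).elim fun k hk => ⟨K k, ⟨k, rfl⟩, hk⟩)
    U hU (by rwa [sInter_range])
  exact ⟨n, hn⟩

lemma WellFiltered.dSpace (h : WellFiltered X) : DSpace X := by
  intro D hD hdir
  obtain ⟨x, hxD, hx⟩ : ∃ x ∈ ⋂₀ ((fun d => saturation {d}) '' D), x ∈ closure D := by
    by_contra! hout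
    obtain ⟨_, ⟨d, hd, rfl⟩, hdD⟩ := h _ (hD.image _)
      (by
        rintro _ ⟨d, -, rfl⟩
        exact ⟨⟨d, subset_saturation _ rfl⟩, isCompact_singleton.saturation,
          isSaturatedSet_saturation _⟩)
      (by
        rintro _ ⟨d₁, hd₁, rfl⟩ _ ⟨d₂, hd₂, rfl⟩
        obtain ⟨d₃, hd₃, h₁, h₂⟩ := hdir d₁ hd₁ d₂ hd₂
        exact ⟨_, ⟨d₃, hd₃, rfl⟩,
          subset_inter (saturation_singleton_subset h₁) (saturation_singleton_subset h₂)⟩)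
      _ isClosed_closure.isOpen_compl hout
    exact hdD (subset_saturation _ rfl) (subset_closure hd)
  have hDx : D ⊆ closure {x} := fun d hd => by
    obtain ⟨_, rfl, hdx⟩ := hxD _ ⟨d, hd, rfl⟩
    exact hdx
  exact ⟨x, (closure_minimal hDx isClosed_closure).antisymm
    (closure_minimal (singleton_subset_iff.2 hx) isClosed_closure)⟩

end Sober

section FirstCountable

variable {X : Type*} [TopologicalSpace X]

lemma IsIrreducible.inter_biInter_nonempty {ι : Type*} {A : Set X} (hA : IsIrreducible A)
    (t : Finset ι) {U : ι → Set X} (hU : ∀ i ∈ t, IsOpen (U i))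
    (hAU : ∀ i ∈ t, (A ∩ U i).Nonempty) : (A ∩ ⋂ i ∈ t, U i).Nonempty := by
  classical
  simpa [sInter_image] using
    isIrreducible_iff_sInter.1 hA (t.image U) (by simpa using hU) (by simpa using hAU)

/-- The sequence is built recursively: its `n`-th term lies in the `n`-th basic neighbourhoods
of the points of `s` and of all earlier terms. -/
lemma IsIrreducible.exists_seq_tendsto_self [FirstCountableTopology X] {A : Set X}
    (hA : IsIrreducible A) {s : Finset X} (hs : ↑s ⊆ A) :
    ∃ w : ℕ → X, (∀ n, w n ∈ A) ∧ (∀ x ∈ s, Tendsto w atTop (𝓝 x)) ∧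
      ∀ n, Tendsto w atTop (𝓝 (w n)) := by
  classical
  choose B hBopen hB using fun x : X => (nhds_basis_opens x).exists_antitone_subbasis
  have step : ∀ (t : Finset X) (n : ℕ), ∃ y, ↑t ⊆ A → y ∈ A ∧ ∀ x ∈ t, y ∈ B x n := by
    intro t n
    by_cases ht : ↑t ⊆ A
    · obtain ⟨y, hyA, hy⟩ := hA.inter_biInter_nonempty t (fun x _ => (hBopen x n).2)
        fun x hx => ⟨x, ht hx, (hBopen x n).1⟩
      exact ⟨y, fun _ => ⟨hyA, mem_iInter₂.1 hy⟩⟩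
    · exact ⟨hA.nonempty.some, fun h => absurd h ht⟩
  choose g hg using step
  let S : ℕ → Finset X := fun n => Nat.rec s (fun k t => insert (g t k) t) n
  let w : ℕ → X := fun n => g (S n) n
  have hSA : ∀ n, ∀ x ∈ S n, x ∈ A := by
    intro n
    induction n with
    | zero => exact hs
    | succ n ih => exact Finset.forall_mem_insert _ _ _ |>.2 ⟨(hg _ _ ih).1, ih⟩
  have hS : Monotone S := monotone_nat_of_le_succ fun n => Finset.subset_insert _ _
  have hw : ∀ n, ∀ x ∈ S n, w n ∈ B x n := fun n => (hg _ _ (hSA n)).2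
  have tendsto_of_eventually_mem : ∀ x, (∀ᶠ n in atTop, x ∈ S n) → Tendsto w atTop (𝓝 x) := by
    intro x hx
    refine (hB x).tendsto_right_iff.2 fun i _ => ?_
    filter_upwards [hx, eventually_ge_atTop i] with n hxn hin
    exact (hB x).antitone hin (hw n x hxn)
  refine ⟨w, fun n => (hg _ _ (hSA n)).1,
    fun x hx => tendsto_of_eventually_mem x (.of_forall fun n => hS n.zero_le hx),
    fun i => tendsto_of_eventually_mem _ ?_⟩
  filter_upwards [eventually_ge_atTop (i + 1)] with n hn
  exact hS hn (Finset.mem_insert_self _ _)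

lemma isCompact_saturation_tail {w : ℕ → X} {n : ℕ} (h : Tendsto w atTop (𝓝 (w n))) :
    IsCompact (saturation (range fun j => w (j + n))) := by
  have h_insert := ((tendsto_add_atTop_iff_nat n).2 h).isCompact_insert_range
  rw [insert_eq_of_mem (mem_range.2 ⟨0, by simp⟩)] at h_insert
  exact h_insert.saturation

lemma specLE_of_tendsto_of_mem_saturation_tails {w : ℕ → X} {x z : X}
    (hx : Tendsto w atTop (𝓝 x)) (hz : ∀ n, z ∈ saturation (range fun j => w (j + n))) :
    specLE x z := by
  refine isClosed_closure.mem_of_frequently_of_tendsto (frequently_atTop.2 fun n => ?_) hx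
  obtain ⟨_, ⟨j, rfl⟩, hjz⟩ := hz n
  exact ⟨j + n, Nat.le_add_left n j, hjz⟩

lemma OmegaWellFiltered.directedOn_of_isIrreducible [FirstCountableTopology X]
    (hω : OmegaWellFiltered X) {A : Set X} (hA : IsIrreducible A) (hAc : IsClosed A) :
    DirectedOn specLE A := by
  classical
  intro b hb M hM
  obtain ⟨w, hwA, hw_tendsto, hw_self⟩ :=
    hA.exists_seq_tendsto_self (s := {b, M}) (by simp [insert_subset_iff, hb, hM])
  set K : ℕ → Set X := fun n => saturation (range fun j => w (j + n))
  have hwK : ∀ n, w n ∈ K n := fun n => subset_saturation _ ⟨0, by simp⟩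
  have hK : Antitone K := fun m n hmn => saturation_mono <| by
    rintro _ ⟨j, rfl⟩
    exact ⟨j + (n - m), by simp only [add_assoc, Nat.sub_add_cancel hmn]⟩
  obtain ⟨z, hzK, hzA⟩ : ∃ z ∈ ⋂ n, K n, z ∈ A := by
    by_contra! hout
    obtain ⟨n, hn⟩ := hω K
      (fun n => ⟨⟨w n, hwK n⟩, isCompact_saturation_tail (hw_self n), isSaturatedSet_saturation _⟩)
      (fun m n => ⟨max m n, subset_inter (hK (le_max_left m n)) (hK (le_max_right m n))⟩)
      Aᶜ hAc.isOpen_compl hout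
    exact hn (hwK n) (hwA n)
  rw [mem_iInter] at hzK
  exact ⟨z, hzA, specLE_of_tendsto_of_mem_saturation_tails (hw_tendsto b (by simp)) hzK,
    specLE_of_tendsto_of_mem_saturation_tails (hw_tendsto M (by simp)) hzK⟩

lemma quasiSober_of_omegaWellFiltered_of_dSpace [FirstCountableTopology X]
    (hω : OmegaWellFiltered X) (hd : DSpace X) : QuasiSober X where
  sober {A} hA hAc := by
    obtain ⟨x, hx⟩ := hd A hA.nonempty (hω.directedOn_of_isIrreducible hA hAc)
    exact ⟨x, by rw [IsGenericPoint, ← hx, hAc.closure_eq]⟩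

end FirstCountable

theorem firstCountable_sober_iff_wellFiltered_general {X : Type*} [TopologicalSpace X]
    [FirstCountableTopology X] :
    (QuasiSober X ↔ WellFiltered X) ∧
    (WellFiltered X ↔ (OmegaWellFiltered X ∧ DSpace X)) := by
  have of_wellFiltered (h : WellFiltered X) : OmegaWellFiltered X ∧ DSpace X :=
    ⟨h.omegaWellFiltered, h.dSpace⟩
  have to_quasiSober (h : OmegaWellFiltered X ∧ DSpace X) : QuasiSober X :=
    quasiSober_of_omegaWellFiltered_of_dSpace h.1 h.2
  refine ⟨⟨fun _ => QuasiSober.wellFiltered, to_quasiSober ∘ of_wellFiltered⟩,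
    ⟨of_wellFiltered, fun h => haveI := to_quasiSober h; QuasiSober.wellFiltered⟩⟩

/-- A first countable T0 space is sober iff it is well-filtered, iff it is an
ω-well-filtered d-space. -/
theorem firstCountable_sober_iff_wellFiltered {X : Type*} [TopologicalSpace X] [T0Space X]
    [FirstCountableTopology X] :
    (QuasiSober X ↔ WellFiltered X) ∧
    (WellFiltered X ↔ (OmegaWellFiltered X ∧ DSpace X)) :=
  firstCountable_sober_iff_wellFiltered_general
end
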